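/- arXiv:1810.00176 — 2 statements merged into one kernel-verified Lean document; each statement's English description precedes it below -/
import Mathlib

section
/- Let R = ℤ[s, s⁻¹] and consider the free R-module with basis {u, v}. The quotient of R·u ⊕ R·v by the submodule generated by (1−s)(u+v), (1−s+s²)u, and (1−s+s²)v is isomorphic as an R-module to R/(R·(1−s+s²)); in particular its underlying additive group is free abelian of rank 2. -/
open LaurentPolynomial

/-- `R = ℤ[s,s⁻¹]`. -/
noncomputable abbrev LZ : Type := LaurentPolynomial ℤ

/-- `s ∈ ℤ[s,s⁻¹]`. -/
noncomputable def sL : LZ := T 1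

/-- Basis vector `u` of `R²`. -/
noncomputable def uV : Fin 2 → LZ := Pi.single 0 1
/-- Basis vector `v` of `R²`. -/
noncomputable def vV : Fin 2 → LZ := Pi.single 1 1

/-- The submodule of `R²` generated by `(1−s)(u+v)`, `(1−s+s²)u` and `(1−s+s²)v`. -/
noncomputable def imA3 : Submodule LZ (Fin 2 → LZ) :=
  Submodule.span LZ {(1 - sL) • (uV + vV), (1 - sL + sL ^ 2) • uV, (1 - sL + sL ^ 2) • vV}

/-!
Since `s (1 - s) + (1 - s + s²) = 1`, the elements `1 - s` and `Φ₆(s) = 1 - s + s²` are coprime,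
so the relations amount to `u + v = 0` and `Φ₆(s) u = 0`, and `x ↦ x₀ - x₁` identifies the
quotient with `R / (Φ₆(s))`. The root of `Φ₆` is a root of unity, hence already invertible in
`ℤ[X] / (Φ₆)`, so `R / (Φ₆(s)) ≅ ℤ[X] / (Φ₆)`, which is free over `ℤ` with basis `1, s`.
-/

open Polynomial Submodule

section QuotientOfPlane

variable {R : Type*} [CommRing R]

theorem span_smul_add_eq_of_isCoprime {M : Type*} [AddCommGroup M] [Module R M] {a c : R}
    (h : IsCoprime a c) (u v : M) :
    span R {a • (u + v), c • u, c • v} = span R {u + v, c • u} := by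
  obtain ⟨x, y, hxy⟩ := h
  apply le_antisymm <;> rw [span_le]
  · rintro w (rfl | rfl | rfl)
    · exact smul_mem _ _ (subset_span (Set.mem_insert _ _))
    · exact subset_span (by simp)
    · have hcv : c • v = c • (u + v) - c • u := by module
      rw [SetLike.mem_coe, hcv]
      exact sub_mem (smul_mem _ _ (subset_span (by simp))) (subset_span (by simp))
  · rintro w (rfl | rfl)
    · have huv : u + v = x • a • (u + v) + y • c • u + y • c • v := by
        linear_combination (norm := module) -hxy • (u + v)
      have hmem :
          x • a • (u + v) + y • c • u + y • c • v ∈ span R {a • (u + v), c • u, c • v} :=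
        add_mem (add_mem (smul_mem _ _ (subset_span (Set.mem_insert _ _)))
          (smul_mem _ _ (subset_span (by simp)))) (smul_mem _ _ (subset_span (by simp)))
      rwa [← huv] at hmem
    · exact subset_span (by simp)

noncomputable def diffModSpan (c : R) : (Fin 2 → R) →ₗ[R] R ⧸ Ideal.span {c} :=
  (Ideal.span {c}).mkQ ∘ₗ
    (LinearMap.proj (R := R) (φ := fun _ : Fin 2 ↦ R) 0 - LinearMap.proj 1)

theorem diffModSpan_apply (c : R) (x : Fin 2 → R) :
    diffModSpan c x = Ideal.Quotient.mk _ (x 0 - x 1) := rfl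

theorem diffModSpan_surjective (c : R) : Function.Surjective (diffModSpan c) := by
  intro y
  obtain ⟨r, rfl⟩ := Ideal.Quotient.mk_surjective y
  exact ⟨Pi.single 0 r, by simp [diffModSpan_apply]⟩

theorem ker_diffModSpan (c : R) :
    LinearMap.ker (diffModSpan c) =
      span R {Pi.single 0 1 + Pi.single 1 1, c • Pi.single 0 1} := by
  apply le_antisymm
  · intro x hx
    rw [LinearMap.mem_ker, diffModSpan_apply, Ideal.Quotient.eq_zero_iff_mem,
      Ideal.mem_span_singleton'] at hx
    obtain ⟨k, hk⟩ := hx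
    have hx : x = x 1 • (Pi.single 0 1 + Pi.single 1 1) + k • c • Pi.single 0 1 := by
      ext i; fin_cases i <;> simp; linear_combination -hk
    rw [hx]
    exact add_mem (smul_mem _ _ (subset_span (by simp))) (smul_mem _ _ (subset_span (by simp)))
  · rw [span_le]
    rintro w (rfl | rfl) <;>
      simp only [SetLike.mem_coe, LinearMap.mem_ker, diffModSpan_apply] <;> simp

noncomputable def quotSpanEquivOfIsCoprime {a c : R} (h : IsCoprime a c) :
    ((Fin 2 → R) ⧸ span R {a • (Pi.single 0 1 + Pi.single 1 1), c • Pi.single 0 1,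
      c • Pi.single 1 1}) ≃ₗ[R] R ⧸ Ideal.span {c} :=
  (quotEquivOfEq _ _ (by rw [span_smul_add_eq_of_isCoprime h, ker_diffModSpan])).trans
    ((diffModSpan c).quotKerEquivOfSurjective (diffModSpan_surjective c))

end QuotientOfPlane

section LaurentQuotient

variable {R : Type*} [CommRing R] {q : R[X]}

theorem eval₂_adjoinRoot_toLaurent (hq : IsUnit (AdjoinRoot.root q)) (p : R[X]) :
    LaurentPolynomial.eval₂ (AdjoinRoot.of q) hq.unit (toLaurent p) = AdjoinRoot.mk q p := by
  rw [eval₂_toLaurent, IsUnit.unit_spec, ← AdjoinRoot.aeval_eq, aeval_def,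
    AdjoinRoot.algebraMap_eq]

theorem eval₂_adjoinRoot_surjective (hq : IsUnit (AdjoinRoot.root q)) :
    Function.Surjective (LaurentPolynomial.eval₂ (AdjoinRoot.of q) hq.unit) := by
  intro a
  obtain ⟨p, rfl⟩ := AdjoinRoot.mk_surjective a
  exact ⟨toLaurent p, eval₂_adjoinRoot_toLaurent hq p⟩

theorem ker_eval₂_adjoinRoot (hq : IsUnit (AdjoinRoot.root q)) :
    RingHom.ker (LaurentPolynomial.eval₂ (AdjoinRoot.of q) hq.unit) =
      Ideal.span {toLaurent q} := by
  ext f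
  rw [RingHom.mem_ker, Ideal.mem_span_singleton]
  constructor
  · intro hf
    obtain ⟨n, p, hp⟩ := f.exists_T_pow
    have hqp : q ∣ p := by
      rw [← AdjoinRoot.mk_eq_zero, ← eval₂_adjoinRoot_toLaurent hq, hp, map_mul, hf, zero_mul]
    rw [← (isUnit_T (n : ℤ)).dvd_mul_right, ← hp]
    exact map_dvd _ hqp
  · rintro ⟨g, rfl⟩
    rw [map_mul, eval₂_adjoinRoot_toLaurent, AdjoinRoot.mk_self, zero_mul]

noncomputable def quotientSpanToLaurentEquivAdjoinRoot (hq : IsUnit (AdjoinRoot.root q)) :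
    R[T;T⁻¹] ⧸ Ideal.span {toLaurent q} ≃+* AdjoinRoot q :=
  (Ideal.quotEquivOfEq (ker_eval₂_adjoinRoot hq).symm).trans
    (RingHom.quotientKerEquivOfSurjective (eval₂_adjoinRoot_surjective hq))

theorem isUnit_root_cyclotomic {n : ℕ} (hn : n ≠ 0) :
    IsUnit (AdjoinRoot.root (cyclotomic n R)) := by
  refine IsUnit.of_pow_eq_one (n := n) ?_ hn
  rw [← sub_eq_zero, ← AdjoinRoot.mk_X, ← map_pow, ← map_one (AdjoinRoot.mk _), ← map_sub,
    AdjoinRoot.mk_eq_zero]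
  exact cyclotomic.dvd_X_pow_sub_one n R

theorem rank_adjoinRoot_of_monic [StrongRankCondition R] (hq : q.Monic) :
    Module.rank R (AdjoinRoot q) = q.natDegree := by
  simp [rank_eq_card_basis (AdjoinRoot.powerBasis' hq).basis]

end LaurentQuotient

theorem toLaurent_cyclotomic_six : toLaurent (cyclotomic 6 ℤ) = 1 - sL + sL ^ 2 := by
  rw [cyclotomic_six, sL]
  simp only [map_add, map_sub, map_pow, toLaurent_X, map_one]
  ring

theorem natDegree_cyclotomic_six : (cyclotomic 6 ℤ).natDegree = 2 := by
  rw [cyclotomic_six]; compute_degree!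

noncomputable def quotientCyclotomicSixEquiv :
    LZ ⧸ Ideal.span {1 - sL + sL ^ 2} ≃+* AdjoinRoot (cyclotomic 6 ℤ) :=
  (Ideal.quotEquivOfEq (by rw [toLaurent_cyclotomic_six])).trans
    (quotientSpanToLaurentEquivAdjoinRoot (isUnit_root_cyclotomic (by norm_num)))

/-- Let `R = ℤ[s,s⁻¹]` and let `u, v` be a basis of the free `R`-module `R²`.  The
quotient of `R²` by the submodule generated by `(1−s)(u+v)`, `(1−s+s²)u` and `(1−s+s²)v`
is isomorphic as an `R`-module to `R/(R·(1−s+s²))`; in particular its underlying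
additive group is free abelian of rank 2.  (Type `A₃`.) -/
theorem quotient_A3 :
    Nonempty (((Fin 2 → LZ) ⧸ imA3) ≃ₗ[LZ] (LZ ⧸ Ideal.span {1 - sL + sL ^ 2})) ∧
      Module.Free ℤ ((Fin 2 → LZ) ⧸ imA3) ∧
      Module.rank ℤ ((Fin 2 → LZ) ⧸ imA3) = 2 := by
  have hcop : IsCoprime (1 - sL) (1 - sL + sL ^ 2) := ⟨sL, 1, by ring⟩
  let e : ((Fin 2 → LZ) ⧸ imA3) ≃ₗ[LZ] (LZ ⧸ Ideal.span {1 - sL + sL ^ 2}) :=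
    quotSpanEquivOfIsCoprime hcop
  let eℤ : ((Fin 2 → LZ) ⧸ imA3) ≃ₗ[ℤ] AdjoinRoot (cyclotomic 6 ℤ) :=
    (e.restrictScalars ℤ).trans quotientCyclotomicSixEquiv.toAddEquiv.toIntLinearEquiv
  have := (cyclotomic.monic 6 ℤ).free_adjoinRoot
  refine ⟨⟨e⟩, .of_equiv eℤ.symm, ?_⟩
  rw [eℤ.rank_eq, rank_adjoinRoot_of_monic (cyclotomic.monic 6 ℤ), natDegree_cyclotomic_six,
    Nat.cast_ofNat]
end

section
/- Let R = ℤ[s, s⁻¹] and consider the free R-module with basis {u, v}. The submodule generated by the three elements (1−s)(u+v), (1−s+s²)u, and (1−s+s²−s³+s⁴)v equals the whole module R·u ⊕ R·v. -/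
/-!
Write `a = 1 - s`, `b = 1 - s + s²`, `c = 1 - s + s² - s³ + s⁴`. Multiplying `a (u + v)` by `c`
and subtracting `a (c v)` shows `a c u` lies in the span, as does `b u`; since `a c` and `b`
generate the unit ideal, `u` lies in the span. Symmetrically `v` does, because `a b` and `c`
are coprime. Both coprimality statements come from explicit Bézout identities whose right-hand
sides are powers of the unit `s`.
-/

open LaurentPolynomial

theorem IsCoprime.of_mul_add_mul_isUnit {R : Type*} [CommRing R] {p q x y : R}
    (hw : IsUnit (p * x + q * y)) : IsCoprime x y := by
  obtain ⟨w, hw⟩ := hw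
  exact ⟨↑w⁻¹ * p, ↑w⁻¹ * q, by rw [mul_assoc, mul_assoc, ← mul_add, ← hw, Units.inv_mul]⟩

theorem Submodule.mem_of_isCoprime {R M : Type*} [CommRing R] [AddCommGroup M] [Module R M]
    {N : Submodule R M} {a b c : R} {x y : M} (hxy : a • (x + y) ∈ N) (hx : b • x ∈ N)
    (hy : c • y ∈ N) (hcop : IsCoprime (a * c) b) : x ∈ N := by
  obtain ⟨p, q, hpq⟩ := hcop
  have hacx : (a * c) • x ∈ N := by
    have : (a * c) • x = c • a • (x + y) - a • c • y := by
      rw [smul_add, smul_add, smul_comm c a y, add_sub_cancel_right, smul_smul, mul_comm]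
    rw [this]
    exact N.sub_mem (N.smul_mem c hxy) (N.smul_mem a hy)
  have : x = p • (a * c) • x + q • b • x := by
    rw [smul_smul, smul_smul, ← add_smul, hpq, one_smul]
  rw [this]
  exact N.add_mem (N.smul_mem p hacx) (N.smul_mem q hx)

theorem isUnit_sL_pow (n : ℕ) : IsUnit (sL ^ n) := (isUnit_T 1).pow n

theorem isCoprime_H3_u :
    IsCoprime ((1 - sL) * (1 - sL + sL ^ 2 - sL ^ 3 + sL ^ 4)) (1 - sL + sL ^ 2) :=
  IsCoprime.of_mul_add_mul_isUnit (p := 1) (q := sL ^ 3 + sL - 1) <| by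
    convert isUnit_sL_pow 4 using 1; ring

theorem isCoprime_H3_v :
    IsCoprime ((1 - sL) * (1 - sL + sL ^ 2)) (1 - sL + sL ^ 2 - sL ^ 3 + sL ^ 4) :=
  IsCoprime.of_mul_add_mul_isUnit (p := 2 * sL ^ 3 - sL ^ 2 + sL - 2)
    (q := 2 * sL ^ 2 - 3 * sL + 2) <| by
    convert isUnit_sL_pow 3 using 1; ring

/-- Let `R = ℤ[s,s⁻¹]` and let `u, v` be a basis of the free `R`-module `R²`.  The
submodule generated by `(1−s)(u+v)`, `(1−s+s²)u` and `(1−s+s²−s³+s⁴)v` is the whole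
module.  (This shows the derived group of the Artin group of type `H₃` is perfect.) -/
theorem span_eq_top_H3 :
    Submodule.span LZ
        {(1 - sL) • (uV + vV), (1 - sL + sL ^ 2) • uV,
          (1 - sL + sL ^ 2 - sL ^ 3 + sL ^ 4) • vV} = ⊤ := by
  set S := Submodule.span LZ
      {(1 - sL) • (uV + vV), (1 - sL + sL ^ 2) • uV, (1 - sL + sL ^ 2 - sL ^ 3 + sL ^ 4) • vV}
  have h₁ : (1 - sL) • (uV + vV) ∈ S := Submodule.subset_span (by simp)
  have h₂ : (1 - sL + sL ^ 2) • uV ∈ S := Submodule.subset_span (by simp)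
  have h₃ : (1 - sL + sL ^ 2 - sL ^ 3 + sL ^ 4) • vV ∈ S := Submodule.subset_span (by simp)
  have hu : uV ∈ S := Submodule.mem_of_isCoprime h₁ h₂ h₃ isCoprime_H3_u
  have hv : vV ∈ S := Submodule.mem_of_isCoprime (add_comm uV vV ▸ h₁) h₃ h₂ isCoprime_H3_v
  rw [eq_top_iff, ← (Pi.basisFun LZ (Fin 2)).span_eq, Submodule.span_le, Set.range_subset_iff,
    Fin.forall_fin_two, Pi.basisFun_apply, Pi.basisFun_apply]
  exact ⟨hu, hv⟩
end
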